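/- arXiv:1602.05423 — 2 statements merged into one kernel-verified Lean document; each statement's English description precedes it below -/
import Mathlib

section
/- Let f ∈ A_N be a differential polynomial homogeneous of degree d (with respect to deg u^α_i = i). Perform the substitution u^γ_n = Σ_{a∈ℤ} (ia)^n p^γ_a e^{iax}, and write the result as the formal Fourier series f = Σ_{k≥0} Σ_{a_1,…,a_k∈ℤ} P_{α_1,…,α_k}(a_1,…,a_k) p^{α_1}_{a_1}⋯p^{α_k}_{a_k} e^{ix(a_1+⋯+a_k)}, where the P_{α_1,…,α_k} are polynomials of degree d in a_1,…,a_k (taken symmetric under simultaneous permutation of the index pairs (α_j, a_j)). Then the evaluation of f at u^γ_n = δ^{γ,1}δ_{n,1} equals (−i)^d times the coefficient of the monomial a_1 a_2 ⋯ a_d in P_{1,…,1}(a_1,…,a_d) (the polynomial with k = d and all α_j = 1). -/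
/-!
Common formal framework for the theory of differential polynomials, local
functionals and tau-structures, following Buryak–Dubrovin–Guéré–Rossi.

Variables of the algebra of differential polynomials: `Sum.inl (α, i)` stands
for `u^α_i` (with `u^α = u^α_0`) and `Sum.inr ()` stands for `ε`.  The paper's
index `1` (the unit direction) corresponds to `(0 : Fin N)` here.
-/

/-- The variables of the algebra of differential polynomials. -/
abbrev DVar (N : ℕ) : Type := (Fin N × ℕ) ⊕ Unit

/-- The ring `Â_N` of (extended) differential polynomials, realized inside the
ring of formal power series in the variables `u^α_i` and `ε`. -/
abbrev DP (N : ℕ) : Type := MvPowerSeries (DVar N) ℂ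

namespace DP

variable {N : ℕ}

/-- Coefficient of a monomial. -/
noncomputable def co (f : DP N) (m : DVar N →₀ ℕ) : ℂ :=
  MvPowerSeries.coeff m f

/-- Build a power series from its coefficients. -/
def ofCo (F : (DVar N →₀ ℕ) → ℂ) : DP N := F

/-- The variable `u^α_i`. -/
noncomputable def uv (α : Fin N) (i : ℕ) : DP N :=
  MvPowerSeries.X (Sum.inl (α, i))

/-- The variable `ε`. -/
noncomputable def eps : DP N := MvPowerSeries.X (Sum.inr ())

/-- The partial derivative `∂/∂v` with respect to one of the variables. -/
noncomputable def pd (v : DVar N) (f : DP N) : DP N :=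
  ofCo fun m => ((m v : ℂ) + 1) * co f (m + Finsupp.single v 1)

/-- The spatial derivative `∂_x = Σ_{α,i} u^α_{i+1} ∂/∂u^α_i`. -/
noncomputable def dx (f : DP N) : DP N :=
  ofCo fun m =>
    ∑ v ∈ m.support,
      (match v with
        | Sum.inl (α, i + 1) =>
            co (pd (Sum.inl (α, i)) f) (m - Finsupp.single (Sum.inl (α, i + 1)) 1)
        | _ => (0 : ℂ))

/-- The variational derivative `δ/δu^μ = Σ_{i≥0} (−∂_x)^i ∘ ∂/∂u^μ_i`. -/
noncomputable def vd (μ : Fin N) (f : DP N) : DP N :=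
  ofCo fun m => ∑ᶠ i : ℕ, ((-1 : ℂ) ^ i) * co (dx^[i] (pd (Sum.inl (μ, i)) f)) m

/-- The weighted degree of a monomial: `deg u^α_i = i`, `deg ε = −1`. -/
noncomputable def wdeg (m : DVar N →₀ ℕ) : ℤ :=
  ∑ v ∈ m.support,
    (match v with
      | Sum.inl (_, i) => (i : ℤ)
      | Sum.inr _ => (-1 : ℤ)) * (m v : ℤ)

/-- Degree-`k` homogeneity (membership in `Â_N^{[k]}`). -/
def IsHomog (k : ℤ) (f : DP N) : Prop :=
  ∀ m, co f m ≠ 0 → wdeg m = k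

/-- Being a constant, i.e. an element of `ℂ[[ε]]`. -/
def IsConst (f : DP N) : Prop :=
  ∀ m, co f m ≠ 0 → ∀ v ∈ m.support, v = Sum.inr ()

/-- Vanishing of the evaluation at `u^*_* = 0`. -/
def VanishAtU0 (f : DP N) : Prop :=
  ∀ k : ℕ, co f (Finsupp.single (Sum.inr ()) k) = 0

/-- Being a genuine differential polynomial: in each ε-degree at most `e`,
polynomiality (bounded degree, boundedly many variables) in the jet
variables `u^α_i`, `i ≥ 1`. -/
def IsDiffPoly (f : DP N) : Prop :=
  ∀ e : ℕ, ∃ D : ℕ, ∀ m, co f m ≠ 0 → m (Sum.inr ()) ≤ e →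
    ((∑ v ∈ m.support,
        (match v with
          | Sum.inl (_, _ + 1) => m v
          | _ => 0)) ≤ D) ∧
      ∀ (α : Fin N) (i : ℕ), D < i → m (Sum.inl (α, i)) = 0

/-- The submodule of constants `ℂ[[ε]] ⊆ Â_N`. -/
noncomputable def constSub (N : ℕ) : Submodule ℂ (DP N) where
  carrier := {f | IsConst f}
  add_mem' := by
    intro f g hf hg m hm
    have hco : co (f + g) m = co f m + co g m := map_add _ _ _
    by_cases h1 : co f m = 0
    · have h2 : co g m ≠ 0 := by
        intro h2; exact hm (by rw [hco, h1, h2, add_zero])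
      exact hg m h2
    · exact hf m h1
  zero_mem' := by
    intro m hm
    exact (hm (map_zero (MvPowerSeries.coeff (R := ℂ) m))).elim
  smul_mem' := by
    intro c f hf m hm
    have hne : co f m ≠ 0 := by
      intro h
      apply hm
      have hsm : co (c • f) m = c * co f m := by
        simp [co]
      rw [hsm, h, mul_zero]
    exact hf m hne

/-- The submodule `ℂ[[ε]] + ∂_x(Â_N)` by which one quotients to get local
functionals. -/
noncomputable def lfSub (N : ℕ) : Submodule ℂ (DP N) :=
  constSub N ⊔ Submodule.span ℂ (Set.range (dx : DP N → DP N))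

/-- The space `Λ̂_N` of local functionals. -/
abbrev LF (N : ℕ) := DP N ⧸ lfSub N

/-- The projection `f ↦ ∫ f dx`. -/
noncomputable def intg : DP N →ₗ[ℂ] LF N := (lfSub N).mkQ

/-- A choice of density for a local functional. -/
noncomputable def rep (h : LF N) : DP N :=
  (Submodule.Quotient.mk_surjective (lfSub N) h).choose

/-- The variational derivative `δ/δu^μ` of a local functional. -/
noncomputable def vdQ (μ : Fin N) (h : LF N) : DP N := vd μ (rep h)

/-- The partial derivative `∂/∂v` of a local functional. -/
noncomputable def pdQ (v : DVar N) (h : LF N) : LF N := intg (pd v (rep h))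

/-- The degree-`k` local functionals `Λ̂_N^{[k]}`. -/
noncomputable def LFHomog (N : ℕ) (k : ℤ) : Set (LF N) :=
  intg '' {f : DP N | IsHomog k f ∧ IsDiffPoly f}

/-- The operator `K = η ∂_x` applied to a tuple of differential polynomials. -/
noncomputable def etaAp (η : Matrix (Fin N) (Fin N) ℂ) (α : Fin N)
    (g : Fin N → DP N) : DP N :=
  ∑ ν : Fin N, η α ν • dx (g ν)

/-- The bracket `{f̄, ḡ}_{η∂_x}` of local functionals. -/
noncomputable def lfbEta (η : Matrix (Fin N) (Fin N) ℂ) (f g : LF N) : LF N :=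
  intg (∑ μ : Fin N, vdQ μ f * etaAp η μ fun ν => vdQ ν g)

/-- The bracket `{f, h̄}_{η∂_x}` of a differential polynomial with a local
functional. -/
noncomputable def pbEta (η : Matrix (Fin N) (Fin N) ℂ) (f : DP N) (h : LF N) : DP N :=
  ofCo fun m => ∑ γ : Fin N, ∑ᶠ n : ℕ,
    co (pd (Sum.inl (γ, n)) f * dx^[n] (etaAp η γ fun μ => vdQ μ h)) m

/-- A general operator `K^{γν} = Σ_j K^{γν}_j ∂_x^j` applied to a tuple of
differential polynomials. -/
noncomputable def Kap (K : Fin N → Fin N → ℕ → DP N) (γ : Fin N)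
    (g : Fin N → DP N) : DP N :=
  ∑ ν : Fin N, ofCo fun m => ∑ᶠ j : ℕ, co (K γ ν j * dx^[j] (g ν)) m

/-- The bracket `{f̄, ḡ}_K` of local functionals. -/
noncomputable def lfbK (K : Fin N → Fin N → ℕ → DP N) (f g : LF N) : LF N :=
  intg (∑ μ : Fin N, vdQ μ f * Kap K μ fun ν => vdQ ν g)

/-- The bracket `{f, h̄}_K` of a differential polynomial with a local
functional. -/
noncomputable def pbK (K : Fin N → Fin N → ℕ → DP N) (f : DP N) (h : LF N) : DP N :=
  ofCo fun m => ∑ γ : Fin N, ∑ᶠ n : ℕ,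
    co (pd (Sum.inl (γ, n)) f * dx^[n] (Kap K γ fun μ => vdQ μ h)) m

/-- Being a hamiltonian operator. -/
structure IsHamOp (K : Fin N → Fin N → ℕ → DP N) : Prop where
  finite : ∀ γ ν, ∃ J : ℕ, ∀ j, J ≤ j → K γ ν j = 0
  deg : ∀ (γ ν : Fin N) (j : ℕ), IsHomog (1 - (j : ℤ)) (K γ ν j)
  poly : ∀ γ ν j, IsDiffPoly (K γ ν j)
  antisym : ∀ f g : LF N, lfbK K f g = -lfbK K g f
  jacobi : ∀ f g h : LF N,
    lfbK K (lfbK K f g) h + lfbK K (lfbK K g h) f + lfbK K (lfbK K h f) g = 0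

/-- A hamiltonian hierarchy: a hamiltonian operator together with pairwise
commuting Hamiltonians `h̄_{β,q} ∈ Λ̂^{[0]}_N` such that `h̄_{1,0}` generates the
spatial translations. -/
structure IsHierarchy [NeZero N] (K : Fin N → Fin N → ℕ → DP N)
    (H : Fin N → ℕ → LF N) : Prop where
  ham : IsHamOp K
  mem : ∀ β q, H β q ∈ LFHomog N 0
  comm : ∀ β q γ p, lfbK K (H β q) (H γ p) = 0
  transl : ∀ α, Kap K α (fun μ => vdQ μ (H 0 0)) = uv α 1

/-- A tau-structure for a hamiltonian hierarchy.  Here `h β q` denotes the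
tau-symmetric density `h_{β,q-1}` (an index shift by one). -/
structure IsTauStructure [NeZero N] (K : Fin N → Fin N → ℕ → DP N)
    (H : Fin N → ℕ → LF N) (h : Fin N → ℕ → DP N) : Prop where
  mem : ∀ β q, IsHomog 0 (h β q) ∧ IsDiffPoly (h β q)
  casimir : ∀ β α, Kap K α (fun μ => vdQ μ (intg (h β 0))) = 0
  indep : LinearIndependent ℂ fun β : Fin N => intg (h β 0)
  nondeg : Matrix.det (Matrix.of fun α β : Fin N => co (K α β 1) 0) ≠ 0
  dens : ∀ β q, intg (h β (q + 1)) = H β q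
  tausym : ∀ α β p q, pbK K (h α p) (H β q) = pbK K (h β q) (H α p)

end DP



/-! Formal Fourier series: power series in the variables `p^γ_a`
(`γ = 1, …, N`, `a ∈ ℤ`) with coefficients in the group algebra `ℂ[ℤ]`, the
element `z^a` of which stands for `e^{iax}`. -/
abbrev FR (N : ℕ) : Type := MvPowerSeries (Fin N × ℤ) (AddMonoidAlgebra ℂ ℤ)

namespace DP

variable {N : ℕ}

/-- The formal Fourier series `Σ_{a∈ℤ} (ia)^n p^γ_a e^{iax}` substituted for
the variable `u^γ_n`. -/
noncomputable def facF (γ : Fin N) (n : ℕ) : FR N := by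
  classical
  exact
  fun M => if h : ∃ a : ℤ, M = Finsupp.single (γ, a) 1 then
    (AddMonoidAlgebra.single h.choose ((Complex.I * (h.choose : ℂ)) ^ n) : AddMonoidAlgebra ℂ ℤ)
  else 0

/-- The substitution value for each variable (the variable `ε` does not occur
under the hypothesis that `f ∈ A_N`, i.e. is `ε`-free). -/
noncomputable def facDV : DVar N → FR N
  | Sum.inl (γ, n) => facF γ n
  | Sum.inr _ => 1

/-- The result of substituting `u^γ_n = Σ_{a∈ℤ} (ia)^n p^γ_a e^{iax}` in a
differential polynomial, as a formal Fourier series. -/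
noncomputable def subF (f : DP N) (M : (Fin N × ℤ) →₀ ℕ) : AddMonoidAlgebra ℂ ℤ :=
  ∑ᶠ m : DVar N →₀ ℕ,
    DP.co f m •
      MvPowerSeries.coeff (R := AddMonoidAlgebra ℂ ℤ) M (∏ v ∈ m.support, facDV v ^ m v)

/-- Evaluation at `u^γ_n = δ^{γ,1}δ_{n,1}`, i.e. at `u^1_1 = 1` and all other
variables equal to `0`. -/
noncomputable def evalAt11 [NeZero N] (f : DP N) : ℂ :=
  ∑ᶠ k : ℕ, DP.co f (Finsupp.single (Sum.inl ((0 : Fin N), 1)) k)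

end DP

/-!
Keep only the Fourier modes `a = 0, 1` of `p^1`, evaluate `e^{iax}` at `x = π` and put
`p^1_0 = p^1_1 = t`. This is a ring homomorphism from formal Fourier series to `ℂ⟦t⟧` which
sends `u^γ_n` to `δ^{γ,1} (0^n - i^n) t`. Hence a monomial of `f` contributes to the coefficient
of `t^d` only if it is a product of exactly `d` jet variables `u^1_n`, `n ≥ 1`; by homogeneity all
of them are then `u^1_1`, so this coefficient is `(-i)^d` times the evaluation of `f`.
On the other hand, the coefficient of `t^d` is the alternating sum of the Fourier coefficients at
the tuples `a ∈ {0, 1}^d`, that is of the values of `P_{1,…,1}` at the vertices of the cube, and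
for a polynomial of degree `≤ d` this inclusion–exclusion sum is `(-1)^d` times the coefficient of
`a_1 ⋯ a_d`.
-/

open Finset
open scoped Nat

theorem neg_one_pow_sub_eq_mul {R : Type*} [Monoid R] [HasDistribNeg R] {d s : ℕ} (h : s ≤ d) :
    (-1 : R) ^ (d - s) = (-1) ^ d * (-1) ^ s := by
  rw [← pow_add, show d + s = d - s + 2 * s by omega, pow_add, pow_mul]
  simp

namespace MvPowerSeries

variable {σ R : Type*} [CommSemiring R]

theorem isHomogeneous_one : IsHomogeneous (1 : MvPowerSeries σ R) 0 := fun {d} hd => by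
  classical
  rw [coeff_one] at hd
  split_ifs at hd with h
  · rw [h, map_zero]
  · exact absurd rfl hd

theorem IsHomogeneous.pow {f : MvPowerSeries σ R} {p : ℕ} (hf : f.IsHomogeneous p) (n : ℕ) :
    (f ^ n).IsHomogeneous (n * p) := by
  induction n with
  | zero => rw [pow_zero, zero_mul]; exact isHomogeneous_one
  | succ n ih => rw [pow_succ, add_mul, one_mul]; exact ih.mul hf

theorem IsHomogeneous.prod {ι : Type*} (s : Finset ι) (F : ι → MvPowerSeries σ R) (n : ι → ℕ)
    (h : ∀ i ∈ s, (F i).IsHomogeneous (n i)) : (∏ i ∈ s, F i).IsHomogeneous (∑ i ∈ s, n i) := by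
  classical
  induction s using Finset.induction_on with
  | empty => rw [prod_empty, sum_empty]; exact isHomogeneous_one
  | insert i s hi ih =>
    rw [prod_insert hi, sum_insert hi]
    exact IsHomogeneous.mul (h i (mem_insert_self i s)) (ih fun j hj => h j (mem_insert_of_mem hj))

theorem coeff_rename_fin_two_const (p : MvPowerSeries (Fin 2) R) (k : ℕ) :
    coeff (Finsupp.single () k) (rename (fun _ => ()) p)
      = ∑ x ∈ antidiagonal k, coeff (Finsupp.single 0 x.1 + Finsupp.single 1 x.2) p := by
  rw [coeff_rename]
  symm
  apply sum_nbij' (fun x => Finsupp.single 0 x.1 + Finsupp.single 1 x.2) fun y => (y 0, y 1)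
  · intro x hx
    rw [HasAntidiagonal.mem_antidiagonal] at hx
    simp [Finsupp.mapDomain_add, Finsupp.mapDomain_single, ← Finsupp.single_add, hx]
  · intro y hy
    simp only [Set.Finite.mem_toFinset, Set.mem_preimage, Set.mem_singleton_iff] at hy
    have := congrArg (fun z : Unit →₀ ℕ => z ()) hy
    simpa [Finsupp.mapDomain, Finsupp.sum_fintype] using this
  · intro x _
    simp
  · intro y _
    ext j
    fin_cases j <;> simp
  · intro x _
    rfl

end MvPowerSeries

namespace MvPolynomial

variable {σ R : Type*} [Fintype σ] [DecidableEq σ] [CommRing R]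

theorem sum_powerset_neg_one_pow_mul_eval_monomial (α : σ →₀ ℕ) :
    ∑ S ∈ (univ : Finset σ).powerset,
        (-1) ^ (Fintype.card σ - #S) * eval (fun j => if j ∈ S then 1 else 0) (monomial α (1 : R))
      = ∏ j, (1 - 0 ^ α j) := by
  simp_rw [sub_eq_add_neg, prod_add, prod_const_one, one_mul, eval_monomial, one_mul,
    Finsupp.prod_fintype _ _ (fun _ => pow_zero _)]
  refine sum_congr rfl fun S _ => ?_
  have hS : ∀ j, (if j ∈ S then (1 : R) else 0) ^ α j = if j ∈ Sᶜ then 0 ^ α j else 1 := by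
    intro j; by_cases hj : j ∈ S <;> simp [hj]
  rw [← card_compl, ← prod_const, prod_congr rfl fun j _ => hS j, prod_ite_mem, univ_inter,
    ← prod_mul_distrib, compl_eq_univ_sdiff]
  simp

theorem prod_one_sub_zero_pow_eq_ite (α : σ →₀ ℕ) (hα : α.degree ≤ Fintype.card σ) :
    ∏ j, (1 - (0 : R) ^ α j) = if α = ∑ j, Finsupp.single j 1 then 1 else 0 := by
  have hones : ∀ i, (∑ j : σ, Finsupp.single j 1) i = 1 := fun i => by
    simp [Finsupp.finsetSum_apply, Finsupp.single_apply]
  by_cases h0 : ∃ j, α j = 0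
  · obtain ⟨j, hj⟩ := h0
    rw [prod_eq_zero (mem_univ j) (by rw [hj, pow_zero, sub_self]), if_neg]
    rintro rfl
    simp [hones] at hj
  · push Not at h0
    have hα1 : ∀ j, α j = 1 := by
      have hsum : ∑ j, α j ≤ ∑ _j : σ, 1 := by
        simpa [Finsupp.degree_eq_sum] using hα
      have hge : ∀ i ∈ univ, 1 ≤ α i := fun i _ => Nat.one_le_iff_ne_zero.mpr (h0 i)
      exact fun j => ((sum_eq_sum_iff_of_le hge).mp
        (le_antisymm (sum_le_sum hge) hsum) j (mem_univ j)).symm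
    rw [if_pos (Finsupp.ext fun j => by rw [hα1, hones])]
    simp [hα1]

theorem coeff_sum_single_one_eq_sum_powerset (P : MvPolynomial σ R)
    (hP : P.totalDegree ≤ Fintype.card σ) :
    coeff (∑ j, Finsupp.single j 1) P
      = ∑ S ∈ (univ : Finset σ).powerset,
          (-1) ^ (Fintype.card σ - #S) * eval (fun j => if j ∈ S then 1 else 0) P := by
  have hmon : ∀ α ∈ P.support, ∑ S ∈ (univ : Finset σ).powerset, (-1) ^ (Fintype.card σ - #S) *
      eval (fun j => if j ∈ S then 1 else 0) (monomial α (coeff α P))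
        = coeff α P * if α = ∑ j, Finsupp.single j 1 then 1 else 0 := by
    intro α hα
    rw [← prod_one_sub_zero_pow_eq_ite α ((le_totalDegree hα).trans hP),
      ← sum_powerset_neg_one_pow_mul_eval_monomial, mul_sum]
    refine sum_congr rfl fun S _ => ?_
    rw [eval_monomial, eval_monomial]
    ring
  conv_rhs => rw [P.as_sum]
  simp_rw [map_sum, mul_sum]
  rw [sum_comm, sum_congr rfl hmon]
  simp only [mul_ite, mul_one, mul_zero, sum_ite_eq']
  split_ifs with h
  · rfl
  · exact notMem_support_iff.mp h

end MvPolynomial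

namespace DP

/-- `z^a ↦ (-1)^a`, i.e. `e^{iax}` at `x = π`. -/
noncomputable def evalAtPi : AddMonoidAlgebra ℂ ℤ →ₐ[ℂ] ℂ :=
  AddMonoidAlgebra.lift ℂ ℂ ℤ ((Units.coeHom ℂ).comp (zpowersHom ℂˣ (-1)))

theorem evalAtPi_single (a : ℤ) (c : ℂ) :
    evalAtPi (AddMonoidAlgebra.single a c) = c * (-1) ^ a := by
  rw [evalAtPi, AddMonoidAlgebra.lift_single]
  simp

variable {N : ℕ}

theorem coeff_single_facF (γ : Fin N) (n : ℕ) (a : ℤ) :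
    MvPowerSeries.coeff (Finsupp.single (γ, a) 1) (facF γ n)
      = AddMonoidAlgebra.single a ((Complex.I * a) ^ n) := by
  have h : ∃ b : ℤ, Finsupp.single (γ, a) 1 = Finsupp.single (γ, b) 1 := ⟨a, rfl⟩
  have hb : h.choose = a := (Prod.ext_iff.mp
    (Finsupp.single_left_injective one_ne_zero h.choose_spec.symm)).2
  simp only [MvPowerSeries.coeff_apply, facF, dif_pos h, hb]

theorem coeff_facF_of_forall_ne {γ : Fin N} {M : (Fin N × ℤ) →₀ ℕ}
    (hM : ∀ a : ℤ, M ≠ Finsupp.single (γ, a) 1) (n : ℕ) :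
    MvPowerSeries.coeff M (facF γ n) = 0 := by
  simp only [MvPowerSeries.coeff_apply, facF, dif_neg (not_exists.mpr hM)]

theorem isHomogeneous_facF (γ : Fin N) (n : ℕ) : (facF γ n).IsHomogeneous 1 := fun {M} hM => by
  by_contra h
  refine hM (coeff_facF_of_forall_ne (fun a ha => h ?_) n)
  rw [ha, Finsupp.weight_single, Pi.one_apply, smul_eq_mul, mul_one]

theorem isHomogeneous_prod_facDV {m : DVar N →₀ ℕ} (hm : m (Sum.inr ()) = 0) :
    (∏ v ∈ m.support, facDV v ^ m v).IsHomogeneous m.degree := by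
  rw [Finsupp.degree_apply]
  refine MvPowerSeries.IsHomogeneous.prod _ _ _ fun v hv => ?_
  obtain ⟨γ, n⟩ | ⟨⟩ := v
  · have h : (facF γ n ^ m (Sum.inl (γ, n))).IsHomogeneous (m (Sum.inl (γ, n)) * 1) :=
      MvPowerSeries.IsHomogeneous.pow (isHomogeneous_facF γ n) _
    rwa [mul_one] at h
  · exact absurd hm (Finsupp.mem_support_iff.mp hv)

theorem le_wdeg {m : DVar N →₀ ℕ} (hm : m (Sum.inr ()) = 0) {γ : Fin N} {n : ℕ}
    (hv : Sum.inl (γ, n) ∈ m.support) : (n : ℤ) ≤ wdeg m := by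
  have hmv : (1 : ℤ) ≤ m (Sum.inl (γ, n)) := by
    exact_mod_cast Nat.one_le_iff_ne_zero.mpr (Finsupp.mem_support_iff.mp hv)
  rw [wdeg]
  refine (le_mul_of_one_le_right (by positivity) hmv).trans (single_le_sum (f := fun v =>
    (match v with | Sum.inl (_, i) => (i : ℤ) | Sum.inr _ => -1) * (m v : ℤ)) (fun v hv' => ?_) hv)
  obtain ⟨γ', i⟩ | ⟨⟩ := v
  · dsimp only
    positivity
  · exact absurd hm (Finsupp.mem_support_iff.mp hv')

variable [NeZero N]

theorem evalAt11_eq_co {d : ℕ} {f : DP N} (hhom : IsHomog (d : ℤ) f) :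
    evalAt11 f = co f (Finsupp.single (Sum.inl (0, 1)) d) := by
  refine finsum_eq_single _ d fun k hk => not_not.mp fun hf => hk ?_
  have hw := hhom _ hf
  rcases eq_or_ne k 0 with rfl | hk0
  · simp [wdeg] at hw
    omega
  · simp [wdeg, hk0] at hw
    exact_mod_cast hw

theorem eq_single_of_wdeg_eq_degree {m : DVar N →₀ ℕ}
    (h : ∀ v ∈ m.support, ∃ n, 1 ≤ n ∧ v = Sum.inl (0, n)) (hw : wdeg m = m.degree) :
    m = Finsupp.single (Sum.inl (0, 1)) m.degree := by
  have hle : ∀ v ∈ m.support, (m v : ℤ) ≤ (match v with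
      | Sum.inl (_, i) => (i : ℤ)
      | Sum.inr _ => (-1 : ℤ)) * (m v : ℤ) := by
    intro v hv
    obtain ⟨n, hn, rfl⟩ := h v hv
    dsimp only
    exact le_mul_of_one_le_left (by positivity) (by exact_mod_cast hn)
  rw [wdeg, Finsupp.degree_apply, Nat.cast_sum, eq_comm, sum_eq_sum_iff_of_le hle] at hw
  have hsupp : m.support ⊆ {Sum.inl (0, 1)} := by
    intro v hv
    obtain ⟨n, -, rfl⟩ := h v hv
    have hn := hw _ hv
    have hmv : (m (Sum.inl (0, n)) : ℤ) ≠ 0 := by exact_mod_cast Finsupp.mem_support_iff.mp hv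
    dsimp only at hn
    rw [mem_singleton, show n = 1 by exact_mod_cast (mul_eq_right₀ hmv).mp hn.symm]
  rw [Finsupp.support_subset_singleton.mp hsupp]
  simp

variable (N) in
def lowModes : Fin 2 ↪ Fin N × ℤ := ⟨fun j => (0, j), fun i j h => Fin.ext (by simpa using h)⟩

/-- The substitution `p^1_0, p^1_1 ↦ t`, all other `p^γ_a ↦ 0`, followed by `evalAtPi`. -/
noncomputable def restrictLowModes : FR N →+* PowerSeries ℂ :=
  ((MvPowerSeries.rename fun _ : Fin 2 => ()).toRingHom.comp
    (MvPowerSeries.map evalAtPi.toRingHom)).comp (MvPowerSeries.killCompl (lowModes N)).toRingHom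

variable (N) in
noncomputable def lowMonomial (s t : ℕ) : (Fin N × ℤ) →₀ ℕ :=
  Finsupp.single (0, 0) s + Finsupp.single (0, 1) t

theorem coeff_restrictLowModes (G : FR N) (k : ℕ) :
    PowerSeries.coeff k (restrictLowModes G)
      = ∑ x ∈ antidiagonal k, evalAtPi (MvPowerSeries.coeff (lowMonomial N x.1 x.2) G) := by
  rw [PowerSeries.coeff_def (s := Finsupp.single () k) (by simp)]
  simp only [restrictLowModes, RingHom.comp_apply, AlgHom.toRingHom_eq_coe, RingHom.coe_coe]
  rw [MvPowerSeries.coeff_rename_fin_two_const]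
  refine sum_congr rfl fun x _ => ?_
  rw [MvPowerSeries.coeff_map, MvPowerSeries.coeff_killCompl, Finsupp.embDomain_add,
    Finsupp.embDomain_single, Finsupp.embDomain_single]
  rfl

theorem coeff_lowMonomial_facF (γ : Fin N) (n s t : ℕ) :
    MvPowerSeries.coeff (lowMonomial N s t) (facF γ n)
      = if γ = 0 ∧ s + t = 1 then AddMonoidAlgebra.single (t : ℤ) ((Complex.I * t) ^ n) else 0 := by
  by_cases h : γ = 0 ∧ s + t = 1
  · obtain ⟨rfl, hst⟩ := h
    rw [if_pos ⟨rfl, hst⟩]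
    obtain ⟨rfl, rfl⟩ | ⟨rfl, rfl⟩ : (s = 1 ∧ t = 0) ∨ (s = 0 ∧ t = 1) := by omega
    · simpa [lowMonomial] using coeff_single_facF (0 : Fin N) n 0
    · simpa [lowMonomial] using coeff_single_facF (0 : Fin N) n 1
  · rw [if_neg h]
    refine coeff_facF_of_forall_ne (fun a ha => h ⟨?_, ?_⟩) n
    · have := congrArg (· (γ, a)) ha
      by_contra hγ
      simp [lowMonomial, Ne.symm hγ] at this
    · simpa [lowMonomial] using congrArg Finsupp.degree ha

noncomputable def lowModeValue : DVar N → ℂ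
  | Sum.inl (γ, n) => if γ = 0 then 0 ^ n - Complex.I ^ n else 0
  | Sum.inr _ => 0

theorem restrictLowModes_facF (γ : Fin N) (n : ℕ) :
    restrictLowModes (facF γ n)
      = PowerSeries.C (lowModeValue (Sum.inl (γ, n))) * PowerSeries.X := by
  ext k
  rw [coeff_restrictLowModes, ← pow_one PowerSeries.X, PowerSeries.coeff_C_mul_X_pow]
  simp_rw [coeff_lowMonomial_facF]
  split_ifs with hk
  · subst hk
    simp only [Finset.Nat.sum_antidiagonal_succ, Finset.Nat.antidiagonal_zero, sum_singleton,
      lowModeValue]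
    by_cases hγ : γ = 0
    · simp only [hγ, true_and, if_true, evalAtPi_single]
      norm_num
      ring
    · simp [hγ]
  · refine sum_eq_zero fun x hx => ?_
    rw [HasAntidiagonal.mem_antidiagonal] at hx
    simp [hx, hk]

theorem restrictLowModes_prod_facDV {m : DVar N →₀ ℕ} (hm : m (Sum.inr ()) = 0) :
    restrictLowModes (∏ v ∈ m.support, facDV v ^ m v)
      = PowerSeries.C (∏ v ∈ m.support, lowModeValue v ^ m v) * PowerSeries.X ^ m.degree := by
  have hfac : ∀ v ∈ m.support, restrictLowModes (facDV v ^ m v)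
      = PowerSeries.C (lowModeValue v ^ m v) * PowerSeries.X ^ m v := by
    intro v hv
    obtain ⟨γ, n⟩ | ⟨⟩ := v
    · rw [map_pow, facDV, restrictLowModes_facF, mul_pow, map_pow]
    · exact absurd hm (Finsupp.mem_support_iff.mp hv)
  rw [map_prod, prod_congr rfl hfac, prod_mul_distrib, ← map_prod, prod_pow_eq_pow_sum,
    Finsupp.degree_apply]

theorem coeff_restrictLowModes_prod_facDV {m : DVar N →₀ ℕ} {d : ℕ} (hm : m (Sum.inr ()) = 0)
    (hw : wdeg m = d) :
    PowerSeries.coeff d (restrictLowModes (∏ v ∈ m.support, facDV v ^ m v))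
      = if m = Finsupp.single (Sum.inl (0, 1)) d then (-Complex.I) ^ d else 0 := by
  rw [restrictLowModes_prod_facDV hm, PowerSeries.coeff_C_mul_X_pow]
  by_cases hsingle : m = Finsupp.single (Sum.inl (0, 1)) d
  · subst hsingle
    rcases eq_or_ne d 0 with rfl | hd
    · simp
    · simp [hd, lowModeValue]
  · rw [if_neg hsingle, ite_eq_right_iff]
    intro hdeg
    refine prod_eq_zero_iff.mpr ?_
    by_contra hne
    push Not at hne
    refine hsingle (hdeg ▸ eq_single_of_wdeg_eq_degree (fun v hv => ?_) (by rw [hw, hdeg]))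
    have hv0 := hne v hv
    have hmv := Finsupp.mem_support_iff.mp hv
    obtain ⟨γ, n⟩ | ⟨⟩ := v
    · by_cases hγ : γ = 0
      · subst hγ
        refine ⟨n, Nat.one_le_iff_ne_zero.mpr fun hn => ?_, rfl⟩
        subst hn
        simp [lowModeValue, hmv] at hv0
      · simp [lowModeValue, hγ, hmv] at hv0
    · simp [lowModeValue, hmv] at hv0

theorem finite_setOf_co_ne_zero_and_coeff_ne_zero {d : ℕ} {f : DP N} (hhom : IsHomog (d : ℤ) f)
    (heps : ∀ m, co f m ≠ 0 → m (Sum.inr ()) = 0) {s t : ℕ} (hst : s + t = d) :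
    {m : DVar N →₀ ℕ | co f m ≠ 0 ∧
      MvPowerSeries.coeff (lowMonomial N s t) (∏ v ∈ m.support, facDV v ^ m v) ≠ 0}.Finite := by
  refine (((univ ×ˢ range (d + 1)).map Function.Embedding.inl).finsupp
    fun _ => range (d + 1)).finite_toSet.subset fun m ⟨hf, hc⟩ => ?_
  have hε := heps m hf
  have hdeg : m.degree = d := by
    by_contra hne
    refine hc (MvPowerSeries.IsHomogeneous.coeff_eq_zero (isHomogeneous_prod_facDV hε) ?_)
    simpa [lowMonomial, hst] using Ne.symm hne
  rw [mem_coe, mem_finsupp_iff]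
  refine ⟨fun v hv => ?_, fun v _ =>
    mem_range.mpr (Nat.lt_succ_of_le (hdeg ▸ Finsupp.le_degree v m))⟩
  obtain ⟨γ, n⟩ | ⟨⟩ := v
  · have hn := (le_wdeg hε hv).trans_eq (hhom m hf)
    simp only [mem_map, mem_product, mem_univ, mem_range, true_and, Function.Embedding.inl_apply]
    exact ⟨(γ, n), by omega, rfl⟩
  · exact absurd hε (Finsupp.mem_support_iff.mp hv)

theorem sum_evalAtPi_subF_lowMonomial {d : ℕ} {f : DP N} (hhom : IsHomog (d : ℤ) f)
    (heps : ∀ m, co f m ≠ 0 → m (Sum.inr ()) = 0) :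
    ∑ x ∈ antidiagonal d, evalAtPi (subF f (lowMonomial N x.1 x.2))
      = (-Complex.I) ^ d * co f (Finsupp.single (Sum.inl (0, 1)) d) := by
  have hfin := fun (x : ℕ × ℕ) (hx : x ∈ antidiagonal d) =>
    finite_setOf_co_ne_zero_and_coeff_ne_zero hhom heps (HasAntidiagonal.mem_antidiagonal.mp hx)
  calc ∑ x ∈ antidiagonal d, evalAtPi (subF f (lowMonomial N x.1 x.2))
      = ∑ x ∈ antidiagonal d, ∑ᶠ m, co f m * evalAtPi (MvPowerSeries.coeff
          (lowMonomial N x.1 x.2) (∏ v ∈ m.support, facDV v ^ m v)) := by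
        refine sum_congr rfl fun x hx => ?_
        rw [subF, map_finsum _ ((hfin x hx).subset fun m hm =>
          ⟨left_ne_zero_of_smul hm, right_ne_zero_of_smul hm⟩)]
        simp only [map_smul, smul_eq_mul]
    _ = ∑ᶠ m, co f m * PowerSeries.coeff d (restrictLowModes (∏ v ∈ m.support, facDV v ^ m v)) := by
        rw [← finsum_sum_comm]
        · simp only [coeff_restrictLowModes, mul_sum]
        · exact fun x hx => (hfin x hx).subset fun m hm =>
            ⟨left_ne_zero_of_mul hm, fun h => right_ne_zero_of_mul hm (by rw [h, map_zero])⟩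
    _ = (-Complex.I) ^ d * co f (Finsupp.single (Sum.inl (0, 1)) d) := by
        rw [finsum_eq_single _ (Finsupp.single (Sum.inl (0, 1)) d)]
        · by_cases hf : co f (Finsupp.single (Sum.inl (0, 1)) d) = 0
          · simp [hf]
          · rw [coeff_restrictLowModes_prod_facDV (heps _ hf) (hhom _ hf), if_pos rfl, mul_comm]
        · intro m hm
          by_cases hf : co f m = 0
          · rw [hf, zero_mul]
          · rw [coeff_restrictLowModes_prod_facDV (heps m hf) (hhom m hf), if_neg hm, mul_zero]

theorem sum_single_indicator_eq_lowMonomial {d : ℕ} (S : Finset (Fin d)) :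
    ∑ j : Fin d, Finsupp.single ((0 : Fin N), if j ∈ S then (1 : ℤ) else 0) 1
      = lowMonomial N (d - #S) #S := by
  simp only [apply_ite (fun a : ℤ => Finsupp.single ((0 : Fin N), a) 1), sum_ite, sum_const,
    filter_mem_eq_inter, univ_inter, filter_not, ← compl_eq_univ_sdiff, card_compl,
    Fintype.card_fin, Finsupp.smul_single, smul_eq_mul, mul_one, lowMonomial, add_comm]

theorem prod_factorial_lowMonomial (s t : ℕ) :
    ∏ v ∈ (lowMonomial N s t).support, (lowMonomial N s t v)! = s ! * t ! := by
  have hdisj : Disjoint (Finsupp.single ((0 : Fin N), (0 : ℤ)) s).support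
      (Finsupp.single ((0 : Fin N), (1 : ℤ)) t).support :=
    disjoint_of_subset_left Finsupp.support_single_subset
      (disjoint_of_subset_right Finsupp.support_single_subset (by simp))
  exact (Finsupp.prod_add_index_of_disjoint hdisj _).trans (by
    rw [Finsupp.prod_single_index rfl, Finsupp.prod_single_index rfl])

theorem factorial_mul_sum_powerset_eq {d : ℕ} {f : DP N} {R : MvPolynomial (Fin d) ℂ}
    (hF : ∀ a : Fin d → ℤ,
      ((∏ v ∈ (∑ j : Fin d, Finsupp.single ((0 : Fin N), a j) 1).support,
          ((∑ j : Fin d, Finsupp.single ((0 : Fin N), a j) 1) v)! : ℕ) : ℂ) •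
        subF f (∑ j : Fin d, Finsupp.single ((0 : Fin N), a j) 1)
      = ((d ! : ℕ) : ℂ) • (AddMonoidAlgebra.single (∑ j : Fin d, a j)
          (MvPolynomial.eval (fun j => ((a j : ℤ) : ℂ)) R) : AddMonoidAlgebra ℂ ℤ)) :
    (d ! : ℂ) * ∑ S ∈ (univ : Finset (Fin d)).powerset,
        (-1) ^ (d - #S) * MvPolynomial.eval (fun j => if j ∈ S then 1 else 0) R
      = (-1) ^ d * d ! * ∑ x ∈ antidiagonal d, evalAtPi (subF f (lowMonomial N x.1 x.2)) := by
  have hS : ∀ S ∈ (univ : Finset (Fin d)).powerset,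
      (d ! : ℂ) * ((-1) ^ (d - #S) * MvPolynomial.eval (fun j => if j ∈ S then 1 else 0) R)
        = (-1) ^ d * (((d - #S)! * (#S)! : ℕ) * evalAtPi (subF f (lowMonomial N (d - #S) #S))) := by
    intro S _
    have h := congrArg evalAtPi (hF fun j => if j ∈ S then 1 else 0)
    rw [sum_single_indicator_eq_lowMonomial, prod_factorial_lowMonomial, map_smul, map_smul,
      evalAtPi_single, smul_eq_mul, smul_eq_mul] at h
    rw [h, neg_one_pow_sub_eq_mul ((card_le_univ S).trans_eq (Fintype.card_fin d))]
    simp only [Int.cast_ite, Int.cast_one, Int.cast_zero, sum_boole, filter_mem_eq_inter,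
      univ_inter, zpow_natCast]
    ring
  rw [mul_sum, sum_congr rfl hS, sum_powerset_apply_card (fun s => (-1) ^ d *
      (((d - s)! * s ! : ℕ) * evalAtPi (subF f (lowMonomial N (d - s) s)))), card_univ,
    Fintype.card_fin, ← Finset.Nat.sum_antidiagonal_swap]
  simp only [Prod.fst_swap, Prod.snd_swap]
  rw [Finset.Nat.sum_antidiagonal_eq_sum_range_succ
    (fun i j => evalAtPi (subF f (lowMonomial N j i))), mul_sum]
  refine sum_congr rfl fun s hs => ?_
  rw [nsmul_eq_mul, ← Nat.choose_mul_factorial_mul_factorial (Nat.lt_succ_iff.mp (mem_range.mp hs))]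
  push_cast
  ring

end DP

open DP in
theorem statement12_general (N : ℕ) [NeZero N] (d : ℕ) (f : DP N)
    (hhom : IsHomog (d : ℤ) f)
    (heps : ∀ m, co f m ≠ 0 → m (Sum.inr ()) = 0)
    (Q : (k : ℕ) → (Fin k → Fin N) → MvPolynomial (Fin k) ℂ)
    (hdeg : ∀ (k : ℕ) (γ : Fin k → Fin N), (Q k γ).totalDegree ≤ d)
    (hfourier : ∀ (k : ℕ) (γ : Fin k → Fin N) (a : Fin k → ℤ),
      ((∏ v ∈ (∑ j : Fin k, Finsupp.single (γ j, a j) 1).support,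
          ((∑ j : Fin k, Finsupp.single (γ j, a j) 1) v).factorial : ℕ) : ℂ) •
        subF f (∑ j : Fin k, Finsupp.single (γ j, a j) 1)
      = ((k.factorial : ℕ) : ℂ) •
          (AddMonoidAlgebra.single (∑ j : Fin k, a j)
            (MvPolynomial.eval (fun j => ((a j : ℤ) : ℂ)) (Q k γ))
            : AddMonoidAlgebra ℂ ℤ)) :
    evalAt11 f
      = (-Complex.I) ^ d *
        MvPolynomial.coeff (∑ j : Fin d, Finsupp.single j 1)
          (Q d (fun _ => (0 : Fin N))) := by
  have hsum := factorial_mul_sum_powerset_eq (hfourier d fun _ => 0)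
  rw [sum_evalAtPi_subF_lowMonomial hhom heps] at hsum
  rw [evalAt11_eq_co hhom, MvPolynomial.coeff_sum_single_one_eq_sum_powerset _
    ((hdeg d _).trans_eq (Fintype.card_fin d).symm), Fintype.card_fin]
  have hfac : (d.factorial : ℂ) ≠ 0 := by exact_mod_cast d.factorial_ne_zero
  refine mul_left_cancel₀ hfac ?_
  have hunit : (-Complex.I) ^ d * (-1) ^ d * (-Complex.I) ^ d = 1 := by
    rw [← mul_pow, ← mul_pow]
    simp
  rw [mul_left_comm, hsum]
  linear_combination (-(d.factorial * co f (Finsupp.single (Sum.inl (0, 1)) d))) * hunit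

open DP in
/-- Lemma: evaluation at `u^γ_n = δ^{γ,1}δ_{n,1}` via the
Fourier coefficients.  Let `f ∈ A_N` be homogeneous of degree `d` and let,
for each `k`, `Q k γ` be the (symmetric, degree-`d`) polynomial coefficients
`P_{α_1,…,α_k}(a_1,…,a_k)` of the Fourier expansion of `f` after the
substitution `u^γ_n = Σ_a (ia)^n p^γ_a e^{iax}`; the expansion identity is
stated monomialwise, with the multiplicity factor `k!/Π_v M(v)!` counting the
ordered tuples realizing a monomial `M` in the `p`-variables.  Then the
evaluation of `f` at `u^γ_n = δ^{γ,1}δ_{n,1}` equals `(−i)^d` times the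
coefficient of `a_1a_2⋯a_d` in `P_{1,…,1}(a_1,…,a_d)`. -/
theorem statement12 (N : ℕ) [NeZero N] (d : ℕ) (f : DP N)
    (hhom : IsHomog (d : ℤ) f)
    (heps : ∀ m, co f m ≠ 0 → m (Sum.inr ()) = 0)
    (hpoly : IsDiffPoly f)
    (Q : (k : ℕ) → (Fin k → Fin N) → MvPolynomial (Fin k) ℂ)
    (hdeg : ∀ (k : ℕ) (γ : Fin k → Fin N), (Q k γ).totalDegree ≤ d)
    (hsymm : ∀ (k : ℕ) (γ : Fin k → Fin N) (σ : Equiv.Perm (Fin k))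
      (z : Fin k → ℂ),
      MvPolynomial.eval (z ∘ σ) (Q k (γ ∘ σ)) = MvPolynomial.eval z (Q k γ))
    (hfourier : ∀ (k : ℕ) (γ : Fin k → Fin N) (a : Fin k → ℤ),
      ((∏ v ∈ (∑ j : Fin k, Finsupp.single (γ j, a j) 1).support,
          ((∑ j : Fin k, Finsupp.single (γ j, a j) 1) v).factorial : ℕ) : ℂ) •
        subF f (∑ j : Fin k, Finsupp.single (γ j, a j) 1)
      = ((k.factorial : ℕ) : ℂ) •
          (AddMonoidAlgebra.single (∑ j : Fin k, a j)
            (MvPolynomial.eval (fun j => ((a j : ℤ) : ℂ)) (Q k γ))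
            : AddMonoidAlgebra ℂ ℤ)) :
    evalAt11 f
      = (-Complex.I) ^ d *
        MvPolynomial.coeff (∑ j : Fin d, Finsupp.single j 1)
          (Q d (fun _ => (0 : Fin N))) :=
  statement12_general N d f hhom heps Q hdeg hfourier
end

section
/- Let η be a symmetric nondegenerate N×N complex matrix and let F ∈ ℂ[[t^*_*,ε]] contain only even powers of ε and satisfy the dilaton equation ∂F/∂t^1_1 = ε ∂F/∂ε + Σ_{n≥0} t^α_n ∂F/∂t^α_n − 2F + ε²c₂ for some constant c₂ ∈ ℂ. Define (w^⊤)^α := η^{αμ}(∂²F/∂t^μ_0∂t^1_0)|_{t^1_0↦t^1_0+x} and (w^⊤)^α_n := ∂_x^n(w^⊤)^α. Then for all α and n ≥ 0, O_dil((w^⊤)^α_n|_{x=0}) = n·(w^⊤)^α_n|_{x=0}, where O_dil := ∂/∂t^1_1 − Σ_{m≥0} t^γ_m ∂/∂t^γ_m − ε ∂/∂ε. -/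
/-!
Formal power series in the variables `x`, `t^α_d` and `ε` (the ring
`ℂ[[x, t^*_*, ε]]`), together with the operations used in the statements.
-/

/-- The variables `t^α_d`, `x` and `ε`. -/
inductive BVar (N : ℕ) : Type
  | t : Fin N → ℕ → BVar N
  | x : BVar N
  | e : BVar N
  deriving DecidableEq

/-- The ring `ℂ[[x, t^*_*, ε]]`. -/
abbrev Big (N : ℕ) : Type := MvPowerSeries (BVar N) ℂ

namespace Big

variable {N : ℕ}

/-- Coefficient of a monomial. -/
noncomputable def co (G : Big N) (μ : BVar N →₀ ℕ) : ℂ := MvPowerSeries.coeff μ G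

/-- Build a power series from its coefficients. -/
def ofCo (F : (BVar N →₀ ℕ) → ℂ) : Big N := F

/-- Partial derivative with respect to one of the variables. -/
noncomputable def pd (v : BVar N) (G : Big N) : Big N :=
  ofCo fun μ => ((μ v : ℂ) + 1) * co G (μ + Finsupp.single v 1)

/-- `Σ_{α,n} t^α_{n+1} ∂G/∂t^α_n`. -/
noncomputable def stringSum (G : Big N) : Big N :=
  ofCo fun μ => ∑ᶠ p : Fin N × ℕ,
    co (MvPowerSeries.X (BVar.t p.1 (p.2 + 1)) * pd (BVar.t p.1 p.2) G) μ

/-- `Σ_{α,n} t^α_n ∂G/∂t^α_n`. -/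
noncomputable def dilatonSum (G : Big N) : Big N :=
  ofCo fun μ => ∑ᶠ p : Fin N × ℕ,
    co (MvPowerSeries.X (BVar.t p.1 p.2) * pd (BVar.t p.1 p.2) G) μ

/-- `ε ∂G/∂ε`. -/
noncomputable def epsDel (G : Big N) : Big N :=
  ofCo fun μ => (μ BVar.e : ℂ) * co G μ

/-- Independence of `x`. -/
def XFree (G : Big N) : Prop := ∀ μ, co G μ ≠ 0 → μ BVar.x = 0

/-- Containing only even powers of `ε`. -/
def EvenEps (G : Big N) : Prop := ∀ μ, co G μ ≠ 0 → Even (μ BVar.e)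

/-- `½ η_{αβ} t^α_0 t^β_0` (with lowered indices given by the inverse matrix). -/
noncomputable def quadEta (η : Matrix (Fin N) (Fin N) ℂ) : Big N :=
  (2 : ℂ)⁻¹ • ∑ α : Fin N, ∑ β : Fin N,
    η⁻¹ α β • (MvPowerSeries.X (BVar.t α 0) * MvPowerSeries.X (BVar.t β 0))

/-- `ε²`. -/
noncomputable def epsSq : Big N := MvPowerSeries.X (BVar.e) ^ 2

/-- The substitution `t^1_0 ↦ t^1_0 + x` in an `x`-free series. -/
noncomputable def shiftX [NeZero N] (G : Big N) : Big N :=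
  ofCo fun μ =>
    (Nat.choose (μ (BVar.t 0 0) + μ BVar.x) (μ BVar.x) : ℂ) *
      co G (μ.erase BVar.x + Finsupp.single (BVar.t 0 0) (μ BVar.x))

/-- The series `(w^⊤)^α = η^{αμ} (∂²F/∂t^μ_0 ∂t^1_0)|_{t^1_0 ↦ t^1_0 + x}`. -/
noncomputable def wt [NeZero N] (η : Matrix (Fin N) (Fin N) ℂ) (F : Big N)
    (α : Fin N) : Big N :=
  ∑ μ : Fin N, η α μ • shiftX (pd (BVar.t μ 0) (pd (BVar.t 0 0) F))

/-- Evaluation at `x = 0` (the result regarded again as an element of the big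
ring, not involving `x`). -/
noncomputable def evalX0 (G : Big N) : Big N :=
  ofCo fun μ => if μ BVar.x = 0 then co G μ else 0

/-- Total descendent degree of a monomial in the `t`-variables:
`t^{α_1}_{d_1} ⋯ t^{α_n}_{d_n} ↦ d_1 + ⋯ + d_n`. -/
noncomputable def tdeg (μ : BVar N →₀ ℕ) : ℕ :=
  ∑ v ∈ μ.support,
    (match v with
      | BVar.t _ d => d * μ v
      | _ => 0)

/-- Iterated partial derivative `∂^n/∂t^{α_1}_{d_1}⋯∂t^{α_n}_{d_n}`. -/
noncomputable def dList (L : List (Fin N × ℕ)) (G : Big N) : Big N :=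
  L.foldr (fun p G => pd (BVar.t p.1 p.2) G) G

/-- The value substituted for the variable `u^α_n` (resp. `ε`): the `n`-th
`x`-derivative of the `α`-th component of the given family (resp. `ε`). -/
noncomputable def fac (W : Fin N → Big N) : DVar N → Big N
  | Sum.inl (α, n) => (pd BVar.x)^[n] (W α)
  | Sum.inr _ => MvPowerSeries.X BVar.e

/-- Substitution of a family of power series (and of its `x`-derivatives) into
a differential polynomial: `f(u; u_x, u_{xx}, …)` evaluated at `u^α = W α`. -/
noncomputable def evalDP (f : DP N) (W : Fin N → Big N) : Big N :=
  ofCo fun μ => ∑ᶠ m : DVar N →₀ ℕ,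
    DP.co f m * co (∏ v ∈ m.support, fac W v ^ m v) μ

end Big

/-!
Under `x = 0` the shift `t^1_0 ↦ t^1_0 + x` turns `∂_x` into `∂/∂t^1_0`, so
`(w^⊤)^α_n|_{x=0} = η^{αμ} ∂^{n+2}F/∂(t^1_0)^{n+1}∂t^μ_0`, and evaluation at `x = 0` commutes
with `O_dil`. Every `∂/∂t^β_d` satisfies `[O_dil, ∂/∂t^β_d] = ∂/∂t^β_d` and kills `ε²`, while
the dilaton equation reads `O_dil F = −2F + c₂ε²`. Hence each `t`-derivative raises the
`O_dil`-eigenvalue by one, and `n + 2` of them turn `F` into an eigenvector with eigenvalue `n`.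
-/

namespace Big

variable {N : ℕ}

lemma ext_co {G H : Big N} (h : ∀ μ, co G μ = co H μ) : G = H :=
  MvPowerSeries.ext h

lemma co_ofCo (F : (BVar N →₀ ℕ) → ℂ) (μ : BVar N →₀ ℕ) : co (ofCo F) μ = F μ := rfl

lemma co_add (G H : Big N) (μ : BVar N →₀ ℕ) : co (G + H) μ = co G μ + co H μ :=
  map_add _ G H

lemma co_sub (G H : Big N) (μ : BVar N →₀ ℕ) : co (G - H) μ = co G μ - co H μ :=
  map_sub _ G H

lemma co_smul (c : ℂ) (G : Big N) (μ : BVar N →₀ ℕ) : co (c • G) μ = c * co G μ :=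
  map_smul _ c G

noncomputable def coeffMap (a : (BVar N →₀ ℕ) → ℂ) (s : (BVar N →₀ ℕ) → BVar N →₀ ℕ) :
    Module.End ℂ (Big N) where
  toFun G := ofCo fun μ => a μ * co G (s μ)
  map_add' G H := ext_co fun μ => by
    simp only [co_ofCo, co_add]
    ring
  map_smul' c G := ext_co fun μ => by
    simp only [co_ofCo, co_smul, RingHom.id_apply]
    ring

lemma co_pd (v : BVar N) (G : Big N) (μ : BVar N →₀ ℕ) :
    co (pd v G) μ = ((μ v : ℂ) + 1) * co G (μ + Finsupp.single v 1) := rfl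

lemma co_epsDel (G : Big N) (μ : BVar N →₀ ℕ) :
    co (epsDel G) μ = (μ BVar.e : ℂ) * co G μ := rfl

lemma co_evalX0 (G : Big N) (μ : BVar N →₀ ℕ) :
    co (evalX0 G) μ = if μ BVar.x = 0 then co G μ else 0 := rfl

lemma co_coeffMap (a : (BVar N →₀ ℕ) → ℂ) (s : (BVar N →₀ ℕ) → BVar N →₀ ℕ) (G : Big N)
    (μ : BVar N →₀ ℕ) : co (coeffMap a s G) μ = a μ * co G (s μ) := rfl

lemma pd_eq_coeffMap (v : BVar N) :
    (pd v : Big N → Big N) = coeffMap (fun μ => (μ v : ℂ) + 1) (· + Finsupp.single v 1) := rfl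

lemma pd_sub (v : BVar N) (G H : Big N) : pd v (G - H) = pd v G - pd v H := by
  simp only [pd_eq_coeffMap, map_sub]

lemma pd_add (v : BVar N) (G H : Big N) : pd v (G + H) = pd v G + pd v H := by
  simp only [pd_eq_coeffMap, map_add]

lemma pd_smul (v : BVar N) (c : ℂ) (G : Big N) : pd v (c • G) = c • pd v G := by
  simp only [pd_eq_coeffMap, map_smul]

lemma pd_comm (v w : BVar N) (G : Big N) : pd v (pd w G) = pd w (pd v G) := by
  obtain rfl | hvw := eq_or_ne v w
  · rfl
  refine ext_co fun μ => ?_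
  simp only [co_pd, Finsupp.add_apply, Finsupp.single_apply, if_neg hvw, if_neg hvw.symm,
    add_zero, add_right_comm μ (Finsupp.single v 1)]
  ring

lemma pd_epsDel {v : BVar N} (hv : v ≠ BVar.e) (G : Big N) :
    pd v (epsDel G) = epsDel (pd v G) := by
  refine ext_co fun μ => ?_
  simp only [co_pd, co_epsDel, Finsupp.add_apply, Finsupp.single_apply, if_neg hv, add_zero]
  ring

lemma pd_t_epsSq (β : Fin N) (d : ℕ) : pd (BVar.t β d) (epsSq : Big N) = 0 := by
  refine ext_co fun μ => ?_
  have hμ : μ + Finsupp.single (BVar.t β d) 1 ≠ Finsupp.single BVar.e 2 := fun h => by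
    simpa using congrArg (· (BVar.t β d)) h
  rw [co_pd]
  simp [co, epsSq, MvPowerSeries.coeff_X_pow, hμ]

lemma t_injective : Function.Injective fun p : Fin N × ℕ => BVar.t p.1 p.2 := by
  rintro ⟨α, d⟩ ⟨β, e⟩ h
  simpa using h

noncomputable def tcount (μ : BVar N →₀ ℕ) : ℕ := ∑ᶠ p : Fin N × ℕ, μ (BVar.t p.1 p.2)

lemma finite_support_comp_t (μ : BVar N →₀ ℕ) :
    (Function.support fun p : Fin N × ℕ => μ (BVar.t p.1 p.2)).Finite := by
  rw [← Function.comp_def, Function.support_comp_eq_preimage]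
  exact Set.Finite.preimage t_injective.injOn μ.hasFiniteSupport

lemma tcount_add (μ ν : BVar N →₀ ℕ) : tcount (μ + ν) = tcount μ + tcount ν :=
  finsum_add_distrib (finite_support_comp_t μ) (finite_support_comp_t ν)

lemma tcount_single_t (β : Fin N) (d k : ℕ) :
    tcount (Finsupp.single (BVar.t β d) k : BVar N →₀ ℕ) = k := by
  rw [tcount, finsum_eq_single _ (β, d) fun p hp => ?_]
  · simp
  · rw [Finsupp.single_apply, if_neg]
    exact fun h => hp (t_injective h).symm

lemma co_X_mul_pd (v : BVar N) (G : Big N) (μ : BVar N →₀ ℕ) :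
    co (MvPowerSeries.X v * pd v G) μ = (μ v : ℂ) * co G μ := by
  classical
  rw [co, MvPowerSeries.X, MvPowerSeries.coeff_monomial_mul]
  split_ifs with h
  · obtain ⟨ν, rfl⟩ := exists_add_of_le h
    rw [add_tsub_cancel_left, one_mul, ← co, co_pd, add_comm ν]
    simp only [Finsupp.add_apply, Finsupp.single_eq_same]
    push_cast
    ring
  · have : μ v = 0 := by
      contrapose! h
      exact Finsupp.single_le_iff.mpr (Nat.one_le_iff_ne_zero.mpr h)
    simp [this]

lemma co_dilatonSum (G : Big N) (μ : BVar N →₀ ℕ) :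
    co (dilatonSum G) μ = (tcount μ : ℂ) * co G μ := by
  have h : co (dilatonSum G) μ = ∑ᶠ p : Fin N × ℕ, (μ (BVar.t p.1 p.2) : ℂ) * co G μ :=
    finsum_congr fun p => co_X_mul_pd (BVar.t p.1 p.2) G μ
  rw [h, ← finsum_mul, tcount]
  exact congrArg (· * co G μ) ((Nat.castAddMonoidHom ℂ).map_finsum (finite_support_comp_t μ)).symm

lemma pd_t_dilatonSum (β : Fin N) (d : ℕ) (G : Big N) :
    pd (BVar.t β d) (dilatonSum G) = dilatonSum (pd (BVar.t β d) G) + pd (BVar.t β d) G := by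
  refine ext_co fun μ => ?_
  simp only [co_add, co_pd, co_dilatonSum, tcount_add, tcount_single_t]
  push_cast
  ring

lemma co_pd_iterate (v : BVar N) (G : Big N) (n : ℕ) (μ : BVar N →₀ ℕ) :
    co ((pd v)^[n] G) μ = ((μ v + 1).ascFactorial n : ℂ) * co G (μ + Finsupp.single v n) := by
  induction n generalizing G with
  | zero => simp
  | succ n ih =>
    rw [Function.iterate_succ_apply, ih, co_pd, add_assoc, ← Finsupp.single_add,
      Nat.ascFactorial_succ]
    simp only [Finsupp.add_apply, Finsupp.single_eq_same]
    push_cast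
    ring

section Dilaton

variable [NeZero N]

open Module.End

noncomputable def dilatonOp : Module.End ℂ (Big N) :=
  coeffMap (fun μ => (μ (BVar.t 0 1) : ℂ) + 1) (· + Finsupp.single (BVar.t 0 1) 1)
    - coeffMap (fun μ => (tcount μ : ℂ) + μ BVar.e) id

lemma dilatonOp_apply (G : Big N) :
    dilatonOp G = pd (BVar.t 0 1) G - dilatonSum G - epsDel G := by
  refine ext_co fun μ => ?_
  rw [dilatonOp, LinearMap.sub_apply, co_sub, co_sub, co_sub, co_coeffMap, co_coeffMap,
    co_dilatonSum, co_epsDel, co_pd, id]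
  ring

lemma dilatonOp_pd_t (β : Fin N) (d : ℕ) (G : Big N) :
    dilatonOp (pd (BVar.t β d) G) = pd (BVar.t β d) (dilatonOp G) + pd (BVar.t β d) G := by
  rw [dilatonOp_apply, dilatonOp_apply, pd_sub, pd_sub, pd_comm, pd_t_dilatonSum,
    pd_epsDel (by simp)]
  abel

lemma pd_t_mem_eigenspace_of_eq {k c : ℂ} {G : Big N} (hG : dilatonOp G = k • G + c • epsSq)
    (β : Fin N) (d : ℕ) : pd (BVar.t β d) G ∈ eigenspace dilatonOp (k + 1) := by
  rw [mem_eigenspace_iff, dilatonOp_pd_t, hG, pd_add, pd_smul, pd_smul, pd_t_epsSq]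
  module

lemma pd_t_mem_eigenspace {k : ℂ} {G : Big N} (hG : G ∈ eigenspace dilatonOp k)
    (β : Fin N) (d : ℕ) : pd (BVar.t β d) G ∈ eigenspace dilatonOp (k + 1) :=
  pd_t_mem_eigenspace_of_eq (c := 0) (by rw [mem_eigenspace_iff.mp hG, zero_smul, add_zero]) β d

lemma pd_t_iterate_mem_eigenspace {k : ℂ} {G : Big N} (hG : G ∈ eigenspace dilatonOp k)
    (β : Fin N) (d n : ℕ) : (pd (BVar.t β d))^[n] G ∈ eigenspace dilatonOp (k + n) := by
  induction n with
  | zero => simpa using hG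
  | succ n ih =>
    rw [Function.iterate_succ_apply', Nat.cast_succ, ← add_assoc]
    exact pd_t_mem_eigenspace ih β d

lemma evalX0_dilatonOp (G : Big N) : evalX0 (dilatonOp G) = dilatonOp (evalX0 G) := by
  refine ext_co fun μ => ?_
  simp only [dilatonOp_apply, co_evalX0, co_sub, co_pd, co_dilatonSum, co_epsDel,
    Finsupp.add_apply, Finsupp.single_apply, reduceCtorEq, if_false, add_zero]
  split_ifs <;> ring

lemma evalX0_mem_eigenspace {k : ℂ} {G : Big N} (hG : G ∈ eigenspace dilatonOp k) :
    evalX0 G ∈ eigenspace dilatonOp k := by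
  rw [mem_eigenspace_iff, ← evalX0_dilatonOp, mem_eigenspace_iff.mp hG]
  refine ext_co fun μ => ?_
  simp only [co_evalX0, co_smul]
  split_ifs <;> simp

lemma shiftX_eq_coeffMap : (shiftX : Big N → Big N) = coeffMap
    (fun μ => ((μ (BVar.t 0 0) + μ BVar.x).choose (μ BVar.x) : ℂ))
    (fun μ => μ.erase BVar.x + Finsupp.single (BVar.t 0 0) (μ BVar.x)) := rfl

lemma wt_eq_shiftX (η : Matrix (Fin N) (Fin N) ℂ) (F : Big N) (α : Fin N) :
    wt η F α = shiftX (∑ μ, η α μ • pd (BVar.t μ 0) (pd (BVar.t 0 0) F)) := by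
  simp only [wt, shiftX_eq_coeffMap, map_sum, map_smul]

lemma evalX0_pd_x_iterate_shiftX (G : Big N) (n : ℕ) :
    evalX0 ((pd BVar.x)^[n] (shiftX G)) = evalX0 ((pd (BVar.t 0 0))^[n] G) := by
  refine ext_co fun μ => ?_
  rw [co_evalX0, co_evalX0]
  split_ifs with hx
  swap
  · rfl
  have herase : (μ + Finsupp.single BVar.x n).erase BVar.x = μ := by
    ext w
    obtain rfl | hw := eq_or_ne w BVar.x
    · simp [hx]
    · simp [Finsupp.erase_ne hw]
  rw [co_pd_iterate, co_pd_iterate, shiftX_eq_coeffMap, co_coeffMap, herase]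
  simp only [Finsupp.add_apply, Finsupp.single_eq_same, Finsupp.single_apply, reduceCtorEq,
    if_false, add_zero, hx, zero_add, Nat.ascFactorial_eq_factorial_mul_choose, Nat.choose_self]
  push_cast
  ring

end Dilaton

end Big

open Big in
theorem statement16_general (N : ℕ) [NeZero N] (η : Matrix (Fin N) (Fin N) ℂ)
    (F : Big N)
    (c₂ : ℂ)
    (hdilaton : Big.pd (BVar.t 0 1) F
      = epsDel F + dilatonSum F - (2 : ℂ) • F + c₂ • epsSq) :
    ∀ (α : Fin N) (n : ℕ),
      Big.pd (BVar.t 0 1) (evalX0 ((Big.pd BVar.x)^[n] (wt η F α)))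
          - dilatonSum (evalX0 ((Big.pd BVar.x)^[n] (wt η F α)))
          - epsDel (evalX0 ((Big.pd BVar.x)^[n] (wt η F α)))
        = (n : ℂ) • evalX0 ((Big.pd BVar.x)^[n] (wt η F α)) := by
  intro α n
  have hF : dilatonOp F = (-2 : ℂ) • F + c₂ • epsSq := by
    rw [dilatonOp_apply, hdilaton]
    module
  have hH : ∑ μ, η α μ • pd (BVar.t μ 0) (pd (BVar.t 0 0) F) ∈ Module.End.eigenspace dilatonOp 0 :=
    Submodule.sum_mem _ fun μ _ => Submodule.smul_mem _ _ <| by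
      convert pd_t_mem_eigenspace (pd_t_mem_eigenspace_of_eq hF 0 0) μ 0
      norm_num
  have hn := evalX0_mem_eigenspace (pd_t_iterate_mem_eigenspace hH 0 0 n)
  rwa [zero_add, Module.End.mem_eigenspace_iff, ← evalX0_pd_x_iterate_shiftX, ← wt_eq_shiftX,
    dilatonOp_apply] at hn

open Big in
/-- dilaton equation for the topological series `w^⊤`.  Let
`η` be symmetric nondegenerate and let `F ∈ ℂ[[t^*_*, ε]]` contain only even
powers of `ε` and satisfy the dilaton equation with constant term `ε²c₂`.
With `(w^⊤)^α_n := ∂_x^n((η^{αμ}∂²F/∂t^μ_0∂t^1_0)|_{t^1_0 ↦ t^1_0+x})`, one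
has `O_dil ((w^⊤)^α_n|_{x=0}) = n·(w^⊤)^α_n|_{x=0}` for all `α` and `n ≥ 0`,
where `O_dil = ∂/∂t^1_1 − Σ_{γ,m} t^γ_m ∂/∂t^γ_m − ε∂/∂ε`. -/
theorem statement16 (N : ℕ) [NeZero N] (η : Matrix (Fin N) (Fin N) ℂ)
    (hsym : η.IsSymm) (hnd : IsUnit η.det)
    (F : Big N) (hxF : XFree F) (hev : EvenEps F)
    (c₂ : ℂ)
    (hdilaton : Big.pd (BVar.t 0 1) F
      = epsDel F + dilatonSum F - (2 : ℂ) • F + c₂ • epsSq) :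
    ∀ (α : Fin N) (n : ℕ),
      Big.pd (BVar.t 0 1) (evalX0 ((Big.pd BVar.x)^[n] (wt η F α)))
          - dilatonSum (evalX0 ((Big.pd BVar.x)^[n] (wt η F α)))
          - epsDel (evalX0 ((Big.pd BVar.x)^[n] (wt η F α)))
        = (n : ℂ) • evalX0 ((Big.pd BVar.x)^[n] (wt η F α)) :=
  statement16_general N η F c₂ hdilaton
end
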